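/- In Theorem 5, the worst-case information leakage of the (M,2) Scheme 2 with S ~ Uniform(B_{w,M}) is ρ^{WIL} = log₂ M − min{log₂(w+1), log₂(M−w+1)}. Precisely: with m ~ Uniform([M]) and Q₂ = S + e_m, conditioned on Q₂ = q with w_H(q) = w + 1, the index m is uniformly distributed over the w+1 positions where q has a 1; conditioned on Q₂ = q with w_H(q) = w − 1, m is uniform over the M − w + 1 positions where q has a 0. Hence min over query values q of H(m | Q₂ = q) = min{log₂(w+1), log₂(M−w+1)} (taking the minimum only over values q of positive probability, with the convention that when w = 0 only weight-1 queries occur and when w = M only weight-(M−1) queries occur). -/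

import Mathlib

open Finset Real

/-- Hamming weight of a binary vector. -/
def wt {M : ℕ} (v : Fin M → Bool) : ℕ := (Finset.univ.filter fun i => v i = true).card

/-- The set `B_{w,M}` of binary length-`M` vectors of Hamming weight `w`. -/
def Bw (M w : ℕ) : Finset (Fin M → Bool) := Finset.univ.filter fun v => wt v = w

/-- Flip coordinate `m` of the binary vector `v` (addition of `e_m` over GF(2)). -/
def flipAt {M : ℕ} (v : Fin M → Bool) (m : Fin M) : Fin M → Bool :=
  Function.update v m (!v m)

/-- Joint distribution of `(m, Q₂)` in the `(M,2)` Scheme 2 with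
`S ~ Uniform(B_{w,M})`, `m ~ Uniform([M])` independent of `S`, and `Q₂ = S + e_m`:
`P(m, q) = (1/M)(1/|B_{w,M}|)` if flipping coordinate `m` of `q` lands in `B_{w,M}`,
else `0`. -/
noncomputable def jointP (M w : ℕ) (m : Fin M) (q : Fin M → Bool) : ℝ :=
  (M : ℝ)⁻¹ * ((Bw M w).card : ℝ)⁻¹ * (if flipAt q m ∈ Bw M w then 1 else 0)

/-- Marginal distribution of the query `Q₂`. -/
noncomputable def margQ (M w : ℕ) (q : Fin M → Bool) : ℝ := ∑ m : Fin M, jointP M w m q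

/-- Conditional entropy `H(m | Q₂ = q)` in bits. -/
noncomputable def condH (M w : ℕ) (q : Fin M → Bool) : ℝ :=
  -∑ m : Fin M, (jointP M w m q / margQ M w q) *
      Real.logb 2 (jointP M w m q / margQ M w q)

/-!
Flipping coordinate `m` of `q` lands in `B_{w,M}` exactly when `q` has weight `w + 1` and
`q_m = 1`, or weight `w - 1` and `q_m = 0`. Since `jointP` is constant on its support, `m | Q₂ = q`
is uniform on the `w + 1` ones, resp. the `M - w + 1` zeros, of `q`, with entropy `log₂ (w + 1)`,
resp. `log₂ (M - w + 1)`. The smaller of the two values is attained: the first (`2w ≤ M`) by a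
query of weight `w + 1 ≤ M`, the second (`2w > M`, so `w ≥ 1`) by one of weight `w - 1`.
-/

/-- Also for `s = ∅`, where both sides are `0` by `0⁻¹ = 0` and `logb b 0 = 0`. -/
lemma neg_sum_uniform_mul_logb {ι : Type*} [Fintype ι] [DecidableEq ι] (s : Finset ι) (b : ℝ) :
    -∑ i, (if i ∈ s then (#s : ℝ)⁻¹ else 0) * Real.logb b (if i ∈ s then (#s : ℝ)⁻¹ else 0) =
      Real.logb b #s := by
  have hterm : ∀ i, (if i ∈ s then (#s : ℝ)⁻¹ else 0) *
      Real.logb b (if i ∈ s then (#s : ℝ)⁻¹ else 0) =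
        if i ∈ s then (#s : ℝ)⁻¹ * Real.logb b (#s : ℝ)⁻¹ else 0 := by
    intro i; split_ifs <;> simp
  simp only [hterm, sum_ite_mem, univ_inter, sum_const, nsmul_eq_mul, Real.logb_inv]
  rcases eq_or_ne (#s : ℝ) 0 with hs | hs
  · simp [hs]
  · field_simp

section Weight

variable {M : ℕ}

lemma filter_flipAt_eq (v : Fin M → Bool) (m : Fin M) :
    univ.filter (fun i => flipAt v m i = true) =
      if v m then (univ.filter fun i => v i = true).erase m
      else insert m (univ.filter fun i => v i = true) := by
  ext i
  rcases eq_or_ne i m with rfl | hne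
  · cases h : v i <;> simp [flipAt, h]
  · cases v m <;> simp [flipAt, Function.update_apply, hne]

lemma wt_flipAt_of_true {v : Fin M → Bool} {m : Fin M} (h : v m = true) :
    wt (flipAt v m) + 1 = wt v := by
  rw [wt, filter_flipAt_eq, h, if_pos rfl, card_erase_add_one (by simp [h]), wt]

lemma wt_flipAt_of_false {v : Fin M → Bool} {m : Fin M} (h : v m = false) :
    wt (flipAt v m) = wt v + 1 := by
  rw [wt, filter_flipAt_eq, h, if_neg (by simp), card_insert_of_notMem (by simp [h]), wt]

lemma card_filter_eq_false (v : Fin M → Bool) :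
    #(univ.filter fun i => v i = false) = M - wt v := by
  have := card_filter_add_card_filter_not (s := univ) fun i => v i = true
  simp only [Bool.not_eq_true, card_univ, Fintype.card_fin] at this
  rw [wt]; omega

lemma exists_wt_eq {k : ℕ} (hk : k ≤ M) : ∃ v : Fin M → Bool, wt v = k :=
  ⟨fun i => decide ((i : ℕ) < k), by
    simpa [wt] using Fin.card_filter_val_lt.trans (min_eq_right hk)⟩

end Weight

/-- The support of `m | Q₂ = q`. -/
def consistentIndices (M w : ℕ) (q : Fin M → Bool) : Finset (Fin M) :=
  univ.filter fun m => flipAt q m ∈ Bw M w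

section Scheme

variable {M w : ℕ} {q : Fin M → Bool}

lemma mem_consistentIndices {m : Fin M} : m ∈ consistentIndices M w q ↔
    q m = true ∧ wt q = w + 1 ∨ q m = false ∧ wt q + 1 = w := by
  simp only [consistentIndices, Bw, mem_filter, mem_univ, true_and]
  cases hm : q m
  · have := wt_flipAt_of_false hm; simp; omega
  · have := wt_flipAt_of_true hm; simp; omega

lemma consistentIndices_of_wt_eq_add_one (h : wt q = w + 1) :
    consistentIndices M w q = univ.filter fun m => q m = true := by
  ext m
  simp [mem_consistentIndices, h]; omega

lemma consistentIndices_of_wt_add_one_eq (h : wt q + 1 = w) :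
    consistentIndices M w q = univ.filter fun m => q m = false := by
  ext m
  simp [mem_consistentIndices, h]; omega

lemma consistentIndices_eq_empty (h₁ : wt q ≠ w + 1) (h₂ : wt q + 1 ≠ w) :
    consistentIndices M w q = ∅ := by
  ext m
  simp [mem_consistentIndices, h₁, h₂]

lemma jointP_eq_ite (m : Fin M) :
    jointP M w m q =
      (M : ℝ)⁻¹ * (#(Bw M w) : ℝ)⁻¹ * if m ∈ consistentIndices M w q then 1 else 0 := by
  simp [jointP, consistentIndices]

lemma margQ_eq_mul_card :
    margQ M w q = (M : ℝ)⁻¹ * (#(Bw M w) : ℝ)⁻¹ * #(consistentIndices M w q) := by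
  simp only [margQ, jointP_eq_ite, ← mul_sum, sum_boole, filter_mem_eq_inter, univ_inter]

lemma normalizer_pos {m : Fin M} (hm : m ∈ consistentIndices M w q) :
    0 < (M : ℝ)⁻¹ * (#(Bw M w) : ℝ)⁻¹ := by
  have hM : 0 < M := m.pos
  have hB : 0 < #(Bw M w) := card_pos.2 ⟨_, (mem_filter.1 hm).2⟩
  positivity

lemma margQ_pos_iff : 0 < margQ M w q ↔ (consistentIndices M w q).Nonempty := by
  rw [margQ_eq_mul_card]
  refine ⟨fun h => card_pos.1 (by exact_mod_cast pos_of_mul_pos_right h (by positivity)),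
    fun ⟨m, hm⟩ => mul_pos (normalizer_pos hm) (by exact_mod_cast card_pos.2 ⟨m, hm⟩)⟩

lemma jointP_div_margQ (m : Fin M) :
    jointP M w m q / margQ M w q =
      if m ∈ consistentIndices M w q then (#(consistentIndices M w q) : ℝ)⁻¹ else 0 := by
  rw [jointP_eq_ite, margQ_eq_mul_card]
  split_ifs with hm
  · rw [mul_one, div_mul_cancel_left₀ (normalizer_pos hm).ne']
  · simp

lemma condH_eq_logb_card : condH M w q = Real.logb 2 #(consistentIndices M w q) := by
  simp only [condH, jointP_div_margQ, neg_sum_uniform_mul_logb]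

lemma condH_of_wt_eq_add_one (h : wt q = w + 1) : condH M w q = Real.logb 2 ((w : ℝ) + 1) := by
  rw [condH_eq_logb_card, consistentIndices_of_wt_eq_add_one h, ← wt, h]
  push_cast; rfl

lemma condH_of_wt_add_one_eq (hw : w ≤ M) (h : wt q + 1 = w) :
    condH M w q = Real.logb 2 ((M : ℝ) - w + 1) := by
  rw [condH_eq_logb_card, consistentIndices_of_wt_add_one_eq h, card_filter_eq_false,
    Nat.cast_sub (by omega)]
  congr 1
  rw [← h]; push_cast; ring

lemma condH_eq_or_eq (hw : w ≤ M) (hq : 0 < margQ M w q) :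
    condH M w q = Real.logb 2 ((w : ℝ) + 1) ∨ condH M w q = Real.logb 2 ((M : ℝ) - w + 1) := by
  by_cases h₁ : wt q = w + 1
  · exact .inl (condH_of_wt_eq_add_one h₁)
  by_cases h₂ : wt q + 1 = w
  · exact .inr (condH_of_wt_add_one_eq hw h₂)
  rw [margQ_pos_iff, consistentIndices_eq_empty h₁ h₂] at hq
  exact absurd hq not_nonempty_empty

lemma exists_margQ_pos_condH_eq_min (hM : 1 ≤ M) (hw : w ≤ M) :
    ∃ q : Fin M → Bool, 0 < margQ M w q ∧
      condH M w q = min (Real.logb 2 ((w : ℝ) + 1)) (Real.logb 2 ((M : ℝ) - w + 1)) := by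
  have hwM : (w : ℝ) ≤ M := by exact_mod_cast hw
  by_cases h2w : 2 * w ≤ M
  · obtain ⟨q, hq⟩ := exists_wt_eq (M := M) (k := w + 1) (by omega)
    have hle : (w : ℝ) + 1 ≤ M - w + 1 := by
      have : (2 * w : ℝ) ≤ M := by exact_mod_cast h2w
      linarith
    refine ⟨q, margQ_pos_iff.2 ?_, ?_⟩
    · rw [consistentIndices_of_wt_eq_add_one hq]
      exact card_pos.1 (by rw [← wt, hq]; omega)
    · rw [condH_of_wt_eq_add_one hq,
        min_eq_left (Real.logb_le_logb_of_le one_lt_two (by positivity) hle)]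
  · obtain ⟨q, hq⟩ := exists_wt_eq (M := M) (k := w - 1) (by omega)
    have hq' : wt q + 1 = w := by omega
    have hle : (M : ℝ) - w + 1 ≤ w + 1 := by
      have : (M : ℝ) < 2 * w := by exact_mod_cast not_le.1 h2w
      linarith
    refine ⟨q, margQ_pos_iff.2 ?_, ?_⟩
    · rw [consistentIndices_of_wt_add_one_eq hq']
      exact card_pos.1 (by rw [card_filter_eq_false]; omega)
    · rw [condH_of_wt_add_one_eq hw hq',
        min_eq_right (Real.logb_le_logb_of_le one_lt_two (by linarith) hle)]

end Scheme

/-- Worst-case information leakage of the `(M,2)` Scheme 2 with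
`S ~ Uniform(B_{w,M})`: the minimum of `H(m | Q₂ = q)` over query values `q` of
positive probability equals `min{log₂(w+1), log₂(M-w+1)}`, so the worst-case
information leakage is `log₂ M - min{log₂(w+1), log₂(M-w+1)}`. -/
theorem scheme2_worst_case_leakage (M w : ℕ) (hM : 1 ≤ M) (hw : w ≤ M)
    (hne : (Finset.univ.filter fun q : Fin M → Bool => 0 < margQ M w q).Nonempty) :
    Real.logb 2 (M : ℝ) -
        (Finset.univ.filter fun q : Fin M → Bool => 0 < margQ M w q).inf' hne
          (condH M w)
      = Real.logb 2 (M : ℝ) -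
          min (Real.logb 2 ((w : ℝ) + 1)) (Real.logb 2 ((M : ℝ) - (w : ℝ) + 1)) := by
  congr 1
  obtain ⟨q, hq, hq_min⟩ := exists_margQ_pos_condH_eq_min hM hw
  refine le_antisymm (hq_min ▸ inf'_le _ (by simpa using hq)) (le_inf' _ _ fun q' hq' => ?_)
  rcases condH_eq_or_eq hw (mem_filter.1 hq').2 with h | h <;> rw [h]
  exacts [min_le_left _ _, min_le_right _ _]
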